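/- arXiv:math/0504465 — 2 statements merged into one kernel-verified Lean document; each statement's English description precedes it below -/
import Mathlib

section
/- Let F be a coherent sheaf of rank r and homological dimension 1 on a smooth projective threefold X, with resolution 0 → E₁ → E₀ → F → 0 by locally free sheaves of ranks k and k+r. Then χ(E₀*⊗E₀) + χ(E₁*⊗E₁) − χ(E₀*⊗E₁) − χ(E₁*⊗E₀) = (r²/24)c₁(X)c₂(X) − (1/2)c₁(X)·Δ(F), where Δ(F) = 2r·c₂(F) − (r−1)c₁(F)². -/
lemma conv_smul (A : Type*) [CommRing A] [Algebra ℚ A] (q : ℚ) (x : A) :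
    q • x = algebraMap ℚ A (1/24) * (algebraMap ℚ A (24*q) * x) := by
  rw [← mul_assoc, ← map_mul, Algebra.smul_def, show (1/24 * (24*q) : ℚ) = q by ring]

lemma choose_two_cast (A : Type*) [CommRing A] [Algebra ℚ A] (n : ℕ) :
    (n.choose 2 : A) = (1/2 : ℚ) • ((n : A)^2 - (n : A)) := by
  have h : 2 * n.choose 2 + n = n ^ 2 := by
    induction n with
    | zero => simp
    | succ m ih =>
      rw [Nat.choose_succ_succ, Nat.choose_one_right]
      ring_nf
      ring_nf at ih
      omega
  have h2 : (2 : A) * (n.choose 2 : A) = (n : A)^2 - (n : A) := by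
    have hc := congrArg (Nat.cast : ℕ → A) h
    push_cast at hc
    linear_combination hc
  have key : ∀ x : A, (1/2 : ℚ) • ((2:A) * x) = x := by
    intro x
    rw [two_mul, ← two_smul ℚ x, smul_smul]
    norm_num
  rw [← h2, key]

/-- Let `F` be a coherent sheaf of rank `r` and homological dimension 1 on a
smooth projective threefold `X`, with resolution `0 → E₁ → E₀ → F → 0` by locally free
sheaves of ranks `k` and `k+r`.  Then
`χ(E₀*⊗E₀) + χ(E₁*⊗E₁) − χ(E₀*⊗E₁) − χ(E₁*⊗E₀) = (r²/24)c₁(X)c₂(X) − (1/2)c₁(X)·Δ(F)`,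
where `Δ(F) = 2r·c₂(F) − (r−1)c₁(F)²`.

Everything takes place in the Chow/cohomology ring `A` (a `ℚ`-algebra).  `χ n d1 d2 d3`
denotes the Riemann–Roch expression for a bundle of rank `n` and Chern classes
`d1, d2, d3` (hypothesis `hchi`).  The Chern classes of the tensor products are given by
the splitting-principle formulas: `E₀*⊗E₀` and `E₁*⊗E₁` have `c₁ = c₃ = 0` and
`c₂ = Δ(E₀)`, `Δ(E₁)`; `E₀*⊗E₁` has classes `c101, c201, c301` given by the tensor-product
formulas (hypotheses `h101`, `h201`), and `E₁*⊗E₀ = (E₀*⊗E₁)*` has classes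
`−c101, c201, −c301`.  The Whitney-sum relations express `c₁(F), c₂(F)` via the
resolution. -/
theorem ext_alternating_sum_homdim_one
    (A : Type*) [CommRing A] [Algebra ℚ A]
    (r k : ℕ)
    (c1X c2X : A)
    (c10 c20 c11 c21 : A)
    (c1F c2F : A)
    (hW1 : c1F = c10 - c11)
    (hW2 : c2F = c20 - c21 - c11 * c1F)
    (chi : ℕ → A → A → A → A)
    (hchi : ∀ (n : ℕ) (d1 d2 d3 : A),
      chi n d1 d2 d3 =
        (1/6 : ℚ) • d1 ^ 3 - (1/2 : ℚ) • (d1 * d2) - (1/2 : ℚ) • (c1X * d2)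
          + (1/4 : ℚ) • (c1X * d1 ^ 2) + (1/12 : ℚ) • (c1X ^ 2 * d1)
          + (1/12 : ℚ) • (c2X * d1) + ((n : ℚ) / 24) • (c1X * c2X) + (1/2 : ℚ) • d3)
    (c101 c201 c301 : A)
    (h101 : c101 = ((k : A) + r) * c11 - (k : A) * c10)
    (h201 : c201 = (k.choose 2 : A) * c10 ^ 2 + (k : A) * c20
        - (((k * k + r * k : ℕ) : A) - 1) * (c10 * c11)
        + ((k : A) + r) * c21 + ((k + r).choose 2 : A) * c11 ^ 2) :
    chi ((k + r) ^ 2) 0 (2 * ((k : A) + r) * c20 - ((k : A) + r - 1) * c10 ^ 2) 0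
      + chi (k ^ 2) 0 (2 * (k : A) * c21 - ((k : A) - 1) * c11 ^ 2) 0
      - chi (k * (k + r)) c101 c201 c301
      - chi (k * (k + r)) (-c101) c201 (-c301)
      = ((r : ℚ) ^ 2 / 24) • (c1X * c2X)
        - (1/2 : ℚ) • (c1X * (2 * (r : A) * c2F - ((r : A) - 1) * c1F ^ 2)) := by
  subst hW1 hW2 h101 h201
  have h24 : ∀ q : ℚ, 24 * (q / 24) = q := fun q => by ring
  simp only [hchi, choose_two_cast, conv_smul, h24]
  norm_num only
  simp only [map_ofNat, map_natCast, map_pow, map_mul, map_one]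
  push_cast
  have ht : algebraMap ℚ A (1/24) * 24 = 1 := by
    rw [show ((24:A)) = algebraMap ℚ A 24 from (map_ofNat _ 24).symm, ← map_mul]
    norm_num
  linear_combination (algebraMap ℚ A (1/24) *
    (24*(k:A)*(r:A)*c1X*c11^2 - 12*(k:A)*c10^2*c1X - 12*(k:A)*c1X*c11^2
      + 12*(k:A)^2*c10^2*c1X + 12*(k:A)^2*c1X*c11^2 - 12*(r:A)*c1X*c11^2
      + 12*(r:A)^2*c1X*c11^2)) * ht
end

section
/- The alternating sum Σᵢ₌₀³ (−1)ⁱ dim Extⁱ(F,F) for a rank 2 reflexive sheaf F on a smooth projective threefold X equals (1/6)c₁(X)c₂(X) − (1/2)c₁(X)Δ(F). -/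
/-- for a rank 2 reflexive sheaf `F` on a smooth projective threefold `X`,
`Σᵢ₌₀³ (−1)ⁱ dim Extⁱ(F,F) = (1/6)c₁(X)c₂(X) − (1/2)c₁(X)Δ(F)` where
`Δ(F) = 4c₂(F) − c₁(F)²`.

`F` being reflexive has homological dimension 1, so admits a resolution
`0 → E₁ → E₀ → F → 0` with `E₁, E₀` locally free of ranks `k, k+2`; the alternating sum of
the Ext dimensions `e0 − e1 + e2 − e3` equals
`χ(E₀*⊗E₀) + χ(E₁*⊗E₁) − χ(E₀*⊗E₁) − χ(E₁*⊗E₀)` (hypothesis `halt`), where each Euler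
characteristic is computed by Riemann–Roch via the degree map `deg` on the top-dimensional
part of the Chow ring `A` (hypothesis `hchi`), and the Chern classes of the tensor-product
bundles are given by the splitting-principle formulas (hypotheses `h101`, `h201` and the
duality relations built into `halt`).  The Whitney relations give `c₁(F), c₂(F)`. -/
theorem ext_alternating_sum_reflexive_rank_two
    (A : Type*) [CommRing A] [Algebra ℚ A]
    (deg : A →ₗ[ℚ] ℚ)
    (k : ℕ)
    (c1X c2X c10 c20 c11 c21 c1F c2F : A)
    (hW1 : c1F = c10 - c11)
    (hW2 : c2F = c20 - c21 - c11 * c1F)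
    (chi : ℕ → A → A → A → ℚ)
    (hchi : ∀ (n : ℕ) (d1 d2 d3 : A),
      chi n d1 d2 d3 = deg
        ((1/6 : ℚ) • d1 ^ 3 - (1/2 : ℚ) • (d1 * d2) - (1/2 : ℚ) • (c1X * d2)
          + (1/4 : ℚ) • (c1X * d1 ^ 2) + (1/12 : ℚ) • (c1X ^ 2 * d1)
          + (1/12 : ℚ) • (c2X * d1) + ((n : ℚ) / 24) • (c1X * c2X) + (1/2 : ℚ) • d3))
    (c101 c201 c301 : A)
    (h101 : c101 = ((k : A) + 2) * c11 - (k : A) * c10)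
    (h201 : c201 = (k.choose 2 : A) * c10 ^ 2 + (k : A) * c20
        - (((k * k + 2 * k : ℕ) : A) - 1) * (c10 * c11)
        + ((k : A) + 2) * c21 + ((k + 2).choose 2 : A) * c11 ^ 2)
    (e0 e1 e2 e3 : ℕ)   -- dim Ext⁰, Ext¹, Ext², Ext³ of (F,F)
    (halt : (e0 : ℚ) - e1 + e2 - e3
      = chi ((k + 2) ^ 2) 0 (2 * ((k : A) + 2) * c20 - ((k : A) + 2 - 1) * c10 ^ 2) 0
        + chi (k ^ 2) 0 (2 * (k : A) * c21 - ((k : A) - 1) * c11 ^ 2) 0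
        - chi (k * (k + 2)) c101 c201 c301
        - chi (k * (k + 2)) (-c101) c201 (-c301)) :
    (e0 : ℚ) - e1 + e2 - e3
      = deg ((1/6 : ℚ) • (c1X * c2X) - (1/2 : ℚ) • (c1X * (4 * c2F - c1F ^ 2))) := by
  subst hW2 hW1 h101 h201
  rw [halt]
  simp only [hchi]
  rw [← map_add, ← map_sub, ← map_sub]
  congr 1
  set e : A := (1/24 : ℚ) • (1 : A) with he_def
  have e_mul : ∀ x : A, e * x = (1/24 : ℚ) • x := by
    intro x
    rw [he_def, smul_mul_assoc, one_mul]
  have key : ∀ (n : ℕ) (x : A), ((n : ℚ)/24) • x = (n : A) * (e * x) := by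
    intro n x
    rw [e_mul, ← nsmul_eq_mul, ← Nat.cast_smul_eq_nsmul ℚ, smul_smul, mul_one_div]
  have he24 : (24 : A) * e = 1 := by
    have : ((24 : ℕ) : A) * (e * 1) = 1 := by
      rw [← key 24 1]
      norm_num
    simpa using this
  have conv : ∀ (q : ℚ) (m : ℕ), (m : ℚ)/24 = q → ∀ x : A, q • x = (m : A) * (e * x) := by
    intro q m hq x
    rw [← hq, key]
  have h6 := conv (1/6) 4 (by norm_num)
  have h4 := conv (1/4) 6 (by norm_num)
  have h12 := conv (1/12) 2 (by norm_num)
  have h2 := conv (1/2) 12 (by norm_num)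
  have hchoose : ∀ n : ℕ, (n.choose 2 : A) = 12 * (e * ((n : A)^2 - (n : A))) := by
    intro n
    have hnat : 2 * n.choose 2 + n = n * n := by
      cases n with
      | zero => simp
      | succ m =>
        have hd : 2 ∣ (m + 1) * m := by
          rw [Nat.mul_comm]
          exact (Nat.even_mul_succ_self m).two_dvd
        rw [Nat.choose_two_right, Nat.succ_sub_one, Nat.mul_div_cancel' hd]
        ring
    have hA : (2 : A) * (n.choose 2 : A) + (n : A) = (n : A) * (n : A) := by
      have := congrArg (fun m : ℕ => (m : A)) hnat
      push_cast at this
      linear_combination this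
    linear_combination (12 * e) * hA - (n.choose 2 : A) * he24
  simp only [h6, h4, h12, h2, key, hchoose]
  push_cast
  linear_combination (12 * e * c1X * (((k : A)^2 - (k : A)) * c10^2
    + (((k : A) + 2)^2 - ((k : A) + 2)) * c11^2)) * he24
end
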